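/- arXiv:2304.10197 — 9 statements merged into one kernel-verified Lean document; each statement's English description precedes it below -/
import Mathlib

section
/- Let μ, p, Π, E, φ, Σ, Θ be real numbers, write s = Σ − (2/3)Θ, W = μ/3 − E − Π/2, and K = W + φ²/4 − s²/4 with K > 0. Define M = W/(2·K^(3/2)) and α = M·√K. If α = 4/9 (the Buchdahl bound is saturated), then φ² − s² = (1/2)·W, i.e. the geometric kinetic energy equals half the geometric potential energy (the Virial relation). -/
/-- Buchdahl bound saturation implies the geometric Virial relation:
if α = M√K = 4/9 then φ² − s² = (1/2)W, i.e. the geometric kinetic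
energy equals half the geometric potential energy. -/
theorem buchdahl_saturation_gives_virial
    (μ p Pa E φ Sg Θ s W K M α : ℝ)
    (hs : s = Sg - (2/3) * Θ)
    (hW : W = μ/3 - E - Pa/2)
    (hK : K = W + φ^2/4 - s^2/4)
    (hKpos : 0 < K)
    (hM : M = W / (2 * K ^ ((3:ℝ)/2)))
    (hα : α = M * Real.sqrt K)
    (hBuchdahl : α = 4/9) :
    φ^2 - s^2 = (1/2) * W := by
  have h32 : K ^ ((3:ℝ)/2) = K * Real.sqrt K := by
    rw [show (3:ℝ)/2 = 1 + 1/2 by norm_num, Real.rpow_add hKpos, Real.rpow_one,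
      ← Real.sqrt_eq_rpow]
  have hsq : Real.sqrt K ≠ 0 := ne_of_gt (Real.sqrt_pos.mpr hKpos)
  have hα2 : α = W / (2 * K) := by
    rw [hα, hM, h32]
    field_simp
  have hWK : W = 8/9 * K := by
    have := hBuchdahl ▸ hα2
    field_simp at this
    linarith
  rw [hK] at hWK
  linarith
end

section
/- Let μ, p, Π, E, φ, Σ, Θ be real numbers, write s = Σ − (2/3)Θ, W = μ/3 − E − Π/2, and K = W + φ²/4 − s²/4. Assume K > 0 and W ≠ 0. Define M = W/(2·K^(3/2)) and α = M·√K. Then the geometric Virial relation φ² − s² = (1/2)·W holds if and only if α = 4/9. (The Buchdahl bound saturation is equivalent to the geometric Virial equilibrium.) -/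
/-- The Buchdahl bound saturation α = 4/9 is equivalent to the geometric
Virial relation φ² − s² = (1/2)W. -/
theorem buchdahl_iff_virial
    (μ p Pa E φ Sg Θ s W K M α : ℝ)
    (hs : s = Sg - (2/3) * Θ)
    (hW : W = μ/3 - E - Pa/2)
    (hK : K = W + φ^2/4 - s^2/4)
    (hKpos : 0 < K)
    (hWne : W ≠ 0)
    (hM : M = W / (2 * K ^ ((3:ℝ)/2)))
    (hα : α = M * Real.sqrt K) :
    φ^2 - s^2 = (1/2) * W ↔ α = 4/9 := by
  have hKrw : K ^ ((3:ℝ)/2) = K * Real.sqrt K := by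
    rw [Real.sqrt_eq_rpow, ← Real.rpow_one_add' (le_of_lt hKpos) (by norm_num)]
    norm_num
  have hsq : Real.sqrt K ≠ 0 := by positivity
  have hKne : K ≠ 0 := ne_of_gt hKpos
  have hαK : α = W / (2 * K) := by
    rw [hα, hM, hKrw]
    field_simp
  constructor
  · intro h
    have hx : K = (9/8) * W := by rw [hK]; linarith
    rw [hαK, hx]
    field_simp
    ring
  · intro h
    rw [hαK] at h
    have h2 : W * 9 = 4 * (2 * K) := by
      rw [div_eq_iff (by positivity : 2 * K ≠ 0)] at h
      linarith
    rw [hK] at h2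
    linarith
end

section
/- Let K, μ, p, Π, E, φ, Σ, Θ, Q : ℝ → ℝ be differentiable functions with K(t) > 0 for all t, and write s = Σ − (2/3)Θ. Suppose that at every t: (i) K′ = s·K, and (ii) (E − μ/3 + Π/2)′ = (3E/2 + Π/4)·s + (1/2)·φ·Q − (1/2)·(μ + p)·s. Define M = (μ/3 − E − Π/2)/(2·K^(3/2)). Then M′ = (1/(4·K^(3/2)))·(s·(p + Π) − φ·Q). -/
/-! The shell curvature obeys `K̇ = sK`, so `(K^r)˙ = r s K^r`; hence the quotient
`N / (2K^(3/2))` has derivative `(Ṅ - (3/2) s N) / (2K^(3/2))`. With `N = μ/3 - E - Π/2`,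
`Ṅ` is minus the Bianchi right-hand side, and the `E`- and `μ`-terms cancel against
`-(3/2) s N`, leaving `(s(p + Π) - φQ)/2`. -/

theorem HasDerivAt.rpow_const_of_mul_self {K : ℝ → ℝ} {a t : ℝ}
    (hK : HasDerivAt K (a * K t) t) (hKpos : 0 < K t) (r : ℝ) :
    HasDerivAt (fun t => K t ^ r) (r * a * K t ^ r) t := by
  refine (hK.rpow_const (p := r) (Or.inl hKpos.ne')).congr_deriv ?_
  rw [Real.rpow_sub hKpos, Real.rpow_one]
  field_simp

theorem HasDerivAt.div_const_mul_rpow_of_mul_self {N K : ℝ → ℝ} {n a t : ℝ}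
    (hN : HasDerivAt N n t) (hK : HasDerivAt K (a * K t) t) (hKpos : 0 < K t)
    {c : ℝ} (hc : c ≠ 0) (r : ℝ) :
    HasDerivAt (fun t => N t / (c * K t ^ r)) ((n - r * a * N t) / (c * K t ^ r)) t := by
  have hKr : K t ^ r ≠ 0 := (Real.rpow_pos_of_pos hKpos r).ne'
  refine (hN.fun_div ((hK.rpow_const_of_mul_self hKpos r).const_mul c)
    (mul_ne_zero hc hKr)).congr_deriv ?_
  field_simp

theorem misner_sharp_mass_evolution_general
    (K μ p Pa E φ Q : ℝ → ℝ)
    (hKdiff : Differentiable ℝ K) (hμdiff : Differentiable ℝ μ)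
    (hPadiff : Differentiable ℝ Pa)
    (hEdiff : Differentiable ℝ E)
    (hKpos : ∀ t, 0 < K t)
    (s : ℝ → ℝ)
    (hKdot : ∀ t, deriv K t = s t * K t)
    (hBianchi : ∀ t, deriv (fun t => E t - μ t / 3 + Pa t / 2) t
      = (3 * E t / 2 + Pa t / 4) * s t + (1/2) * φ t * Q t
        - (1/2) * (μ t + p t) * s t)
    (M : ℝ → ℝ)
    (hM : M = fun t => (μ t / 3 - E t - Pa t / 2) / (2 * (K t) ^ ((3:ℝ)/2))) :
    ∀ t, deriv M t
      = (1 / (4 * (K t) ^ ((3:ℝ)/2))) * (s t * (p t + Pa t) - φ t * Q t) := by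
  intro t
  have hA : HasDerivAt (fun t => E t - μ t / 3 + Pa t / 2)
      ((3 * E t / 2 + Pa t / 4) * s t + (1/2) * φ t * Q t - (1/2) * (μ t + p t) * s t) t := by
    rw [← hBianchi t]
    exact (((hEdiff t).sub ((hμdiff t).div_const 3)).add ((hPadiff t).div_const 2)).hasDerivAt
  have hN : HasDerivAt (fun t => μ t / 3 - E t - Pa t / 2)
      (-((3 * E t / 2 + Pa t / 4) * s t + (1/2) * φ t * Q t
        - (1/2) * (μ t + p t) * s t)) t := by
    refine hA.fun_neg.congr_of_eventuallyEq (.of_forall fun u => ?_)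
    ring
  have hK : HasDerivAt K (s t * K t) t := hKdot t ▸ (hKdiff t).hasDerivAt
  have hKr : K t ^ ((3:ℝ)/2) ≠ 0 := (Real.rpow_pos_of_pos (hKpos t) _).ne'
  rw [hM, (hN.div_const_mul_rpow_of_mul_self hK (hKpos t) two_ne_zero _).deriv]
  field_simp
  ring

/-- Time evolution of the Misner–Sharp mass: given K̇ = sK and the Bianchi
evolution equation for E − μ/3 + Π/2, the mass M = (μ/3 − E − Π/2)/(2K^(3/2))
satisfies Ṁ = (1/(4K^(3/2)))·(s(p + Π) − φQ). -/
theorem misner_sharp_mass_evolution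
    (K μ p Pa E φ Sg Θ Q : ℝ → ℝ)
    (hKdiff : Differentiable ℝ K) (hμdiff : Differentiable ℝ μ)
    (hpdiff : Differentiable ℝ p) (hPadiff : Differentiable ℝ Pa)
    (hEdiff : Differentiable ℝ E) (hφdiff : Differentiable ℝ φ)
    (hSgdiff : Differentiable ℝ Sg) (hΘdiff : Differentiable ℝ Θ)
    (hQdiff : Differentiable ℝ Q)
    (hKpos : ∀ t, 0 < K t)
    (s : ℝ → ℝ) (hs : s = fun t => Sg t - (2/3) * Θ t)
    (hKdot : ∀ t, deriv K t = s t * K t)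
    (hBianchi : ∀ t, deriv (fun t => E t - μ t / 3 + Pa t / 2) t
      = (3 * E t / 2 + Pa t / 4) * s t + (1/2) * φ t * Q t
        - (1/2) * (μ t + p t) * s t)
    (M : ℝ → ℝ)
    (hM : M = fun t => (μ t / 3 - E t - Pa t / 2) / (2 * (K t) ^ ((3:ℝ)/2))) :
    ∀ t, deriv M t
      = (1 / (4 * (K t) ^ ((3:ℝ)/2))) * (s t * (p t + Pa t) - φ t * Q t) :=
  misner_sharp_mass_evolution_general K μ p Pa E φ Q hKdiff hμdiff hPadiff hEdiff hKpos s hKdot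
    hBianchi M hM
end

section
/- Let K, μ, p, Π, E, φ, Σ, Θ, Q : ℝ → ℝ be differentiable functions of a radial parameter r with K(r) > 0 for all r, and write s = Σ − (2/3)Θ. Suppose that at every r: (i) K′ = −φ·K, and (ii) (μ/3 − E − Π/2)′ = (3/2)·φ·(E + Π/2) − (1/2)·s·Q. Define M = (μ/3 − E − Π/2)/(2·K^(3/2)). Then M′ = (1/(4·K^(3/2)))·(φ·μ − s·Q). -/
/-! Since K̂ = −φK, the factor K^(-3/2) has logarithmic derivative (3/2)φ, so
M̂ = (F̂ + (3/2)φF)/(2K^(3/2)) for F = μ/3 − E − Π/2. Inserting the Bianchi equation, the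
E and Π terms cancel and F̂ + (3/2)φF = (φμ − sQ)/2. -/

theorem HasDerivAt.rpow_const_of_eq_mul {K : ℝ → ℝ} {c r : ℝ} (a : ℝ)
    (hK : HasDerivAt K (c * K r) r) (hpos : 0 < K r) :
    HasDerivAt (fun x => K x ^ a) (a * c * K r ^ a) r := by
  refine (hK.rpow_const (p := a) (Or.inl hpos.ne')).congr_deriv ?_
  rw [Real.rpow_sub hpos, Real.rpow_one]
  field_simp

theorem HasDerivAt.div_rpow_of_eq_mul {F K : ℝ → ℝ} {F' c r : ℝ} (a : ℝ)
    (hF : HasDerivAt F F' r) (hK : HasDerivAt K (c * K r) r) (hpos : 0 < K r) :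
    HasDerivAt (fun x => F x / K x ^ a) ((F' - a * c * F r) / K r ^ a) r := by
  have hKa : 0 < K r ^ a := Real.rpow_pos_of_pos hpos a
  refine (hF.div (hK.rpow_const_of_eq_mul a hpos) hKa.ne').congr_deriv ?_
  field_simp

theorem misner_sharp_mass_radial_propagation_general
    (K μ Pa E φ Q : ℝ → ℝ)
    (hKdiff : Differentiable ℝ K) (hμdiff : Differentiable ℝ μ)
    (hPadiff : Differentiable ℝ Pa)
    (hEdiff : Differentiable ℝ E)
    (hKpos : ∀ r, 0 < K r)
    (s : ℝ → ℝ)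
    (hKhat : ∀ r, deriv K r = -φ r * K r)
    (hBianchi : ∀ r, deriv (fun r => μ r / 3 - E r - Pa r / 2) r
      = (3/2) * φ r * (E r + Pa r / 2) - (1/2) * s r * Q r)
    (M : ℝ → ℝ)
    (hM : M = fun r => (μ r / 3 - E r - Pa r / 2) / (2 * (K r) ^ ((3:ℝ)/2))) :
    ∀ r, deriv M r
      = (1 / (4 * (K r) ^ ((3:ℝ)/2))) * (φ r * μ r - s r * Q r) := by
  intro r
  set F := fun r => μ r / 3 - E r - Pa r / 2
  have hF : HasDerivAt F ((3/2) * φ r * (E r + Pa r / 2) - (1/2) * s r * Q r) r := by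
    rw [← hBianchi r]
    exact ((by fun_prop : Differentiable ℝ F) r).hasDerivAt
  have hK : HasDerivAt K (-φ r * K r) r := hKhat r ▸ (hKdiff r).hasDerivAt
  have hM' := (hF.div_rpow_of_eq_mul ((3:ℝ)/2) hK (hKpos r)).div_const 2
  have hMF : M = fun x => F x / K x ^ ((3:ℝ)/2) / 2 := by
    rw [hM]
    ext x
    rw [div_div, mul_comm]
  have hKa : 0 < K r ^ ((3:ℝ)/2) := Real.rpow_pos_of_pos (hKpos r) _
  rw [hMF, hM'.deriv]
  field_simp
  ring

/-- Radial propagation of the Misner–Sharp mass: given K̂ = −φK and the Bianchi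
radial propagation equation for μ/3 − E − Π/2, the mass
M = (μ/3 − E − Π/2)/(2K^(3/2)) satisfies M̂ = (1/(4K^(3/2)))·(φμ − sQ). -/
theorem misner_sharp_mass_radial_propagation
    (K μ p Pa E φ Sg Θ Q : ℝ → ℝ)
    (hKdiff : Differentiable ℝ K) (hμdiff : Differentiable ℝ μ)
    (hpdiff : Differentiable ℝ p) (hPadiff : Differentiable ℝ Pa)
    (hEdiff : Differentiable ℝ E) (hφdiff : Differentiable ℝ φ)
    (hSgdiff : Differentiable ℝ Sg) (hΘdiff : Differentiable ℝ Θ)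
    (hQdiff : Differentiable ℝ Q)
    (hKpos : ∀ r, 0 < K r)
    (s : ℝ → ℝ) (hs : s = fun r => Sg r - (2/3) * Θ r)
    (hKhat : ∀ r, deriv K r = -φ r * K r)
    (hBianchi : ∀ r, deriv (fun r => μ r / 3 - E r - Pa r / 2) r
      = (3/2) * φ r * (E r + Pa r / 2) - (1/2) * s r * Q r)
    (M : ℝ → ℝ)
    (hM : M = fun r => (μ r / 3 - E r - Pa r / 2) / (2 * (K r) ^ ((3:ℝ)/2))) :
    ∀ r, deriv M r
      = (1 / (4 * (K r) ^ ((3:ℝ)/2))) * (φ r * μ r - s r * Q r) :=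
  misner_sharp_mass_radial_propagation_general K μ Pa E φ Q hKdiff hμdiff hPadiff hEdiff hKpos s
    hKhat hBianchi M hM
end

section
/- Let φ, Σ, Θ, μ, p, Π, E, Q, A : ℝ → ℝ be differentiable functions, write s = Σ − (2/3)Θ, and suppose that at every t the evolution equations hold: (i) φ′ = −s·(A − φ/2) + Q; (ii) s′ = −A·φ + (1/2)·s² + (μ + 3p)/3 − E + Π/2; (iii) (E − μ/3 + Π/2)′ = (3E/2 + Π/4)·s + (1/2)·φ·Q − (1/2)·(μ + p)·s. Define the Virial constraint C = φ² − s² + (1/2)·(E − μ/3 + Π/2). Then C′ = s·C + (9/4)·(φ·Q − s·((μ + 3p)/3 + Π/2 − E)). -/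
/-- Evolution of the Virial constraint C = φ² − s² + (1/2)(E − μ/3 + Π/2)
under the 1+1+2 evolution equations:
C′ = sC + (9/4)(φQ − s((μ + 3p)/3 + Π/2 − E)). -/
theorem virial_constraint_evolution
    (φ Sg Θ μ p Pa E Q A : ℝ → ℝ)
    (hφdiff : Differentiable ℝ φ) (hSgdiff : Differentiable ℝ Sg)
    (hΘdiff : Differentiable ℝ Θ) (hμdiff : Differentiable ℝ μ)
    (hpdiff : Differentiable ℝ p) (hPadiff : Differentiable ℝ Pa)
    (hEdiff : Differentiable ℝ E) (hQdiff : Differentiable ℝ Q)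
    (hAdiff : Differentiable ℝ A)
    (s : ℝ → ℝ) (hs : s = fun t => Sg t - (2/3) * Θ t)
    (hφdot : ∀ t, deriv φ t = -s t * (A t - φ t / 2) + Q t)
    (hsdot : ∀ t, deriv s t
      = -A t * φ t + (1/2) * (s t)^2 + (μ t + 3 * p t) / 3 - E t + Pa t / 2)
    (hBianchi : ∀ t, deriv (fun t => E t - μ t / 3 + Pa t / 2) t
      = (3 * E t / 2 + Pa t / 4) * s t + (1/2) * φ t * Q t
        - (1/2) * (μ t + p t) * s t)
    (C : ℝ → ℝ)
    (hC : C = fun t => (φ t)^2 - (s t)^2 + (1/2) * (E t - μ t / 3 + Pa t / 2)) :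
    ∀ t, deriv C t
      = s t * C t
        + (9/4) * (φ t * Q t - s t * ((μ t + 3 * p t) / 3 + Pa t / 2 - E t)) := by
  intro t
  have hsdiff : Differentiable ℝ s := by
    rw [hs]; exact hSgdiff.sub ((differentiable_const _).mul hΘdiff)
  have hφ' : HasDerivAt φ (-s t * (A t - φ t / 2) + Q t) t := by
    rw [← hφdot t]; exact (hφdiff t).hasDerivAt
  have hs' : HasDerivAt s (-A t * φ t + (1/2) * (s t)^2 + (μ t + 3 * p t) / 3 - E t + Pa t / 2) t := by
    rw [← hsdot t]; exact (hsdiff t).hasDerivAt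
  have hWdiff : Differentiable ℝ (fun t => E t - μ t / 3 + Pa t / 2) :=
    (hEdiff.sub (hμdiff.div_const 3)).add (hPadiff.div_const 2)
  have hW' : HasDerivAt (fun t => E t - μ t / 3 + Pa t / 2)
      ((3 * E t / 2 + Pa t / 4) * s t + (1/2) * φ t * Q t - (1/2) * (μ t + p t) * s t) t := by
    rw [← hBianchi t]; exact (hWdiff t).hasDerivAt
  have hC' : HasDerivAt C
      (2 * φ t ^ 1 * (-s t * (A t - φ t / 2) + Q t)
        - 2 * s t ^ 1 * (-A t * φ t + (1/2) * (s t)^2 + (μ t + 3 * p t) / 3 - E t + Pa t / 2)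
        + (1/2) * ((3 * E t / 2 + Pa t / 4) * s t + (1/2) * φ t * Q t - (1/2) * (μ t + p t) * s t)) t := by
    rw [hC]; exact ((hφ'.pow 2).sub (hs'.pow 2)).add (hW'.const_mul (1/2))
  rw [hC'.deriv, hC]
  ring
end

section
/- Let φ, Σ, Θ, μ, p, Π, E, Q, A : ℝ → ℝ be differentiable functions, write s = Σ − (2/3)Θ, and suppose the evolution equations hold at t₀: (i) φ′ = −s·(A − φ/2) + Q; (ii) s′ = −A·φ + (1/2)·s² + (μ + 3p)/3 − E + Π/2; (iii) (E − μ/3 + Π/2)′ = (3E/2 + Π/4)·s + (1/2)·φ·Q − (1/2)·(μ + p)·s. Define C = φ² − s² + (1/2)·(E − μ/3 + Π/2). If C(t₀) = 0, C′(t₀) = 0 and φ(t₀) ≠ 0, then Q(t₀) = (s(t₀)/φ(t₀))·((μ(t₀) + 3p(t₀))/3 + Π(t₀)/2 − E(t₀)). (An accreting star remaining in Virial equilibrium must expel exactly this heat flux.) -/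
/-!
Differentiating `C = φ² − s² + X/2`, with `X = E − μ/3 + Π/2`, and substituting the three evolution
equations, the acceleration `A` cancels and what remains is
`Ċ = (9/4)·(φ·Q − s·((μ + 3p)/3 + Π/2 − E)) + s·C`.
So `C = Ċ = 0` forces `φ·Q = s·((μ + 3p)/3 + Π/2 − E)`, and one divides by `φ ≠ 0`.
-/

theorem HasDerivAt.virial_constraint {φ s X : ℝ → ℝ} {φ' s' X' t : ℝ}
    (hφ : HasDerivAt φ φ' t) (hs : HasDerivAt s s' t) (hX : HasDerivAt X X' t) :
    HasDerivAt (fun t => φ t ^ 2 - s t ^ 2 + (1/2) * X t)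
      (2 * φ t * φ' - 2 * s t * s' + (1/2) * X') t :=
  (((hφ.fun_pow 2).fun_sub (hs.fun_pow 2)).fun_add (hX.const_mul (1/2))).congr_deriv
    (by ring)

theorem virial_rate_eq (φ s A Q μ p Pa E : ℝ) :
    2 * φ * (-s * (A - φ / 2) + Q)
        - 2 * s * (-A * φ + (1/2) * s ^ 2 + (μ + 3 * p) / 3 - E + Pa / 2)
        + (1/2) * ((3 * E / 2 + Pa / 4) * s + (1/2) * φ * Q - (1/2) * (μ + p) * s)
      = (9/4) * (φ * Q - s * ((μ + 3 * p) / 3 + Pa / 2 - E))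
        + s * (φ ^ 2 - s ^ 2 + (1/2) * (E - μ / 3 + Pa / 2)) := by
  ring

theorem heat_flux_eq_of_virial_equilibrium {φ s A Q μ p Pa E : ℝ} (hφ : φ ≠ 0)
    (hC : φ ^ 2 - s ^ 2 + (1/2) * (E - μ / 3 + Pa / 2) = 0)
    (hCdot : 2 * φ * (-s * (A - φ / 2) + Q)
        - 2 * s * (-A * φ + (1/2) * s ^ 2 + (μ + 3 * p) / 3 - E + Pa / 2)
        + (1/2) * ((3 * E / 2 + Pa / 4) * s + (1/2) * φ * Q - (1/2) * (μ + p) * s) = 0) :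
    Q = (s / φ) * ((μ + 3 * p) / 3 + Pa / 2 - E) := by
  rw [virial_rate_eq, hC] at hCdot
  rw [div_mul_eq_mul_div, eq_div_iff hφ]
  linear_combination (4/9) * hCdot

theorem virial_equilibrium_heat_flux_general
    (φ Sg Θ μ p Pa E Q A : ℝ → ℝ) (t₀ : ℝ)
    (hφdiff : Differentiable ℝ φ) (hSgdiff : Differentiable ℝ Sg)
    (hΘdiff : Differentiable ℝ Θ) (hμdiff : Differentiable ℝ μ)
    (hPadiff : Differentiable ℝ Pa)
    (hEdiff : Differentiable ℝ E)
    (s : ℝ → ℝ) (hs : s = fun t => Sg t - (2/3) * Θ t)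
    (hφdot : deriv φ t₀ = -s t₀ * (A t₀ - φ t₀ / 2) + Q t₀)
    (hsdot : deriv s t₀
      = -A t₀ * φ t₀ + (1/2) * (s t₀)^2 + (μ t₀ + 3 * p t₀) / 3 - E t₀ + Pa t₀ / 2)
    (hBianchi : deriv (fun t => E t - μ t / 3 + Pa t / 2) t₀
      = (3 * E t₀ / 2 + Pa t₀ / 4) * s t₀ + (1/2) * φ t₀ * Q t₀
        - (1/2) * (μ t₀ + p t₀) * s t₀)
    (C : ℝ → ℝ)
    (hC : C = fun t => (φ t)^2 - (s t)^2 + (1/2) * (E t - μ t / 3 + Pa t / 2))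
    (hC0 : C t₀ = 0) (hCdot0 : deriv C t₀ = 0) (hφne : φ t₀ ≠ 0) :
    Q t₀ = (s t₀ / φ t₀) * ((μ t₀ + 3 * p t₀) / 3 + Pa t₀ / 2 - E t₀) := by
  have hsdiff : Differentiable ℝ s := hs ▸ hSgdiff.sub (hΘdiff.const_mul _)
  have hX : DifferentiableAt ℝ (fun t => E t - μ t / 3 + Pa t / 2) t₀ := by fun_prop
  have hCderiv := (hφdiff t₀).hasDerivAt.virial_constraint (hsdiff t₀).hasDerivAt hX.hasDerivAt
  rw [hC, hCderiv.deriv, hφdot, hsdot, hBianchi] at hCdot0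
  rw [hC] at hC0
  exact heat_flux_eq_of_virial_equilibrium hφne hC0 hCdot0

/-- An accreting star remaining in Virial equilibrium (C = 0 with Ċ = 0 at t₀)
must expel exactly the heat flux Q = (s/φ)·((μ + 3p)/3 + Π/2 − E). -/
theorem virial_equilibrium_heat_flux
    (φ Sg Θ μ p Pa E Q A : ℝ → ℝ) (t₀ : ℝ)
    (hφdiff : Differentiable ℝ φ) (hSgdiff : Differentiable ℝ Sg)
    (hΘdiff : Differentiable ℝ Θ) (hμdiff : Differentiable ℝ μ)
    (hpdiff : Differentiable ℝ p) (hPadiff : Differentiable ℝ Pa)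
    (hEdiff : Differentiable ℝ E) (hQdiff : Differentiable ℝ Q)
    (hAdiff : Differentiable ℝ A)
    (s : ℝ → ℝ) (hs : s = fun t => Sg t - (2/3) * Θ t)
    (hφdot : deriv φ t₀ = -s t₀ * (A t₀ - φ t₀ / 2) + Q t₀)
    (hsdot : deriv s t₀
      = -A t₀ * φ t₀ + (1/2) * (s t₀)^2 + (μ t₀ + 3 * p t₀) / 3 - E t₀ + Pa t₀ / 2)
    (hBianchi : deriv (fun t => E t - μ t / 3 + Pa t / 2) t₀
      = (3 * E t₀ / 2 + Pa t₀ / 4) * s t₀ + (1/2) * φ t₀ * Q t₀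
        - (1/2) * (μ t₀ + p t₀) * s t₀)
    (C : ℝ → ℝ)
    (hC : C = fun t => (φ t)^2 - (s t)^2 + (1/2) * (E t - μ t / 3 + Pa t / 2))
    (hC0 : C t₀ = 0) (hCdot0 : deriv C t₀ = 0) (hφne : φ t₀ ≠ 0) :
    Q t₀ = (s t₀ / φ t₀) * ((μ t₀ + 3 * p t₀) / 3 + Pa t₀ / 2 - E t₀) :=
  virial_equilibrium_heat_flux_general φ Sg Θ μ p Pa E Q A t₀ hφdiff hSgdiff hΘdiff hμdiff hPadiff
    hEdiff s hs hφdot hsdot hBianchi C hC hC0 hCdot0 hφne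
end

section
/- Let φ, Σ, Θ, μ, p, Π, E, Q, A : ℝ → ℝ be differentiable functions on an interval I containing t₀, write s = Σ − (2/3)Θ, suppose s is continuous on I, and suppose on all of I: (i) φ′ = −s·(A − φ/2) + Q; (ii) s′ = −A·φ + (1/2)·s² + (μ + 3p)/3 − E + Π/2; (iii) (E − μ/3 + Π/2)′ = (3E/2 + Π/4)·s + (1/2)·φ·Q − (1/2)·(μ + p)·s; and (iv) φ ≠ 0 on I and Q = (s/φ)·((μ + 3p)/3 + Π/2 − E) on I. Define C = φ² − s² + (1/2)·(E − μ/3 + Π/2). If C(t₀) = 0, then C(t) = 0 for all t in I. (A Buchdahl star expelling exactly this heat flux remains in Virial equilibrium for all time and never forms a black hole.) -/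
/-!
Along the flow the Virial constraint obeys `C' = s C + (9/4) (φ Q - s ((μ + 3p)/3 + Π/2 - E))`,
and the prescribed heat flux is exactly the one that kills the source term. Hence `C' = s C`.
On each compact subinterval through `t₀` the continuous coefficient `s` is bounded, so this
linear ODE is Lipschitz there and uniqueness forces `C` to agree with the zero solution.
-/

open Set NNReal

section LinearODE

variable {F : Type*} [NormedAddCommGroup F] [NormedSpace ℝ F] {c : ℝ → ℝ} {f : ℝ → F} {a b : ℝ}

theorem exists_lipschitzWith_smul_of_continuousOn_Icc (hc : ContinuousOn c (Icc a b)) :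
    ∃ K : ℝ≥0, ∀ t ∈ Icc a b, LipschitzWith K (fun x : F => c t • x) := by
  obtain ⟨K, hK⟩ := isCompact_Icc.exists_bound_of_continuousOn hc
  refine ⟨Real.toNNReal K, fun t ht => (lipschitzWith_smul (c t)).weaken ?_⟩
  rw [← NNReal.coe_le_coe, coe_nnnorm]
  exact (hK t ht).trans (Real.le_coe_toNNReal K)

theorem eqOn_zero_Icc_of_hasDerivAt_smul_of_left (hc : ContinuousOn c (Icc a b))
    (hf : ∀ t ∈ Icc a b, HasDerivAt f (c t • f t) t) (ha : f a = 0) : EqOn f 0 (Icc a b) := by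
  obtain ⟨K, hK⟩ := exists_lipschitzWith_smul_of_continuousOn_Icc (F := F) hc
  refine ODE_solution_unique_of_mem_Icc_right (v := fun t x => c t • x) (s := fun _ => univ)
    (fun t ht => (hK t (Ico_subset_Icc_self ht)).lipschitzOnWith)
    (fun t ht => (hf t ht).continuousAt.continuousWithinAt)
    (fun t ht => (hf t (Ico_subset_Icc_self ht)).hasDerivWithinAt) (fun _ _ => mem_univ _)
    continuousOn_const (fun _ _ => by simpa using hasDerivWithinAt_zero (F := F) _ _)
    (fun _ _ => mem_univ _) ha

theorem eqOn_zero_Icc_of_hasDerivAt_smul_of_right (hc : ContinuousOn c (Icc a b))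
    (hf : ∀ t ∈ Icc a b, HasDerivAt f (c t • f t) t) (hb : f b = 0) : EqOn f 0 (Icc a b) := by
  obtain ⟨K, hK⟩ := exists_lipschitzWith_smul_of_continuousOn_Icc (F := F) hc
  refine ODE_solution_unique_of_mem_Icc_left (v := fun t x => c t • x) (s := fun _ => univ)
    (fun t ht => (hK t (Ioc_subset_Icc_self ht)).lipschitzOnWith)
    (fun t ht => (hf t ht).continuousAt.continuousWithinAt)
    (fun t ht => (hf t (Ioc_subset_Icc_self ht)).hasDerivWithinAt) (fun _ _ => mem_univ _)
    continuousOn_const (fun _ _ => by simpa using hasDerivWithinAt_zero (F := F) _ _)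
    (fun _ _ => mem_univ _) hb

theorem Set.OrdConnected.eqOn_zero_of_hasDerivAt_smul {I : Set ℝ} {t₀ : ℝ} (hI : I.OrdConnected)
    (hc : ContinuousOn c I) (hf : ∀ t ∈ I, HasDerivAt f (c t • f t) t) (ht₀ : t₀ ∈ I)
    (hf₀ : f t₀ = 0) : EqOn f 0 I := by
  intro t ht
  rcases le_total t₀ t with h | h
  · have hsub : Icc t₀ t ⊆ I := hI.out ht₀ ht
    exact eqOn_zero_Icc_of_hasDerivAt_smul_of_left (hc.mono hsub) (fun u hu => hf u (hsub hu))
      hf₀ (right_mem_Icc.mpr h)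
  · have hsub : Icc t t₀ ⊆ I := hI.out ht ht₀
    exact eqOn_zero_Icc_of_hasDerivAt_smul_of_right (hc.mono hsub) (fun u hu => hf u (hsub hu))
      hf₀ (left_mem_Icc.mpr h)

end LinearODE

theorem hasDerivAt_virial {φ s μ p Pa E Q A : ℝ → ℝ} {t : ℝ}
    (hφ : HasDerivAt φ (-s t * (A t - φ t / 2) + Q t) t)
    (hs : HasDerivAt s
      (-A t * φ t + (1/2) * (s t)^2 + (μ t + 3 * p t) / 3 - E t + Pa t / 2) t)
    (hB : HasDerivAt (fun t => E t - μ t / 3 + Pa t / 2)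
      ((3 * E t / 2 + Pa t / 4) * s t + (1/2) * φ t * Q t - (1/2) * (μ t + p t) * s t) t) :
    HasDerivAt (fun t => (φ t)^2 - (s t)^2 + (1/2) * (E t - μ t / 3 + Pa t / 2))
      (s t * ((φ t)^2 - (s t)^2 + (1/2) * (E t - μ t / 3 + Pa t / 2))
        + 9/4 * (φ t * Q t - s t * ((μ t + 3 * p t) / 3 + Pa t / 2 - E t))) t := by
  refine (((hφ.pow 2).sub (hs.pow 2)).add (hB.const_mul (1/2))).congr_deriv ?_
  norm_num
  ring

theorem virial_equilibrium_preserved_general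
    (φ μ p Pa E Q A : ℝ → ℝ) (I : Set ℝ) (t₀ : ℝ)
    (hI : I.OrdConnected) (ht₀ : t₀ ∈ I)
    (s : ℝ → ℝ)
    (hφdot : ∀ t ∈ I, HasDerivAt φ (-s t * (A t - φ t / 2) + Q t) t)
    (hsdot : ∀ t ∈ I, HasDerivAt s
      (-A t * φ t + (1/2) * (s t)^2 + (μ t + 3 * p t) / 3 - E t + Pa t / 2) t)
    (hBianchi : ∀ t ∈ I, HasDerivAt (fun t => E t - μ t / 3 + Pa t / 2)
      ((3 * E t / 2 + Pa t / 4) * s t + (1/2) * φ t * Q t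
        - (1/2) * (μ t + p t) * s t) t)
    (hφne : ∀ t ∈ I, φ t ≠ 0)
    (hQ : ∀ t ∈ I, Q t = (s t / φ t) * ((μ t + 3 * p t) / 3 + Pa t / 2 - E t))
    (C : ℝ → ℝ)
    (hC : C = fun t => (φ t)^2 - (s t)^2 + (1/2) * (E t - μ t / 3 + Pa t / 2))
    (hC0 : C t₀ = 0) :
    ∀ t ∈ I, C t = 0 := by
  have hs_cont : ContinuousOn s I := fun t ht => (hsdot t ht).continuousAt.continuousWithinAt
  have hC_deriv : ∀ t ∈ I, HasDerivAt C (s t • C t) t := by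
    intro t ht
    have hsource : φ t * Q t - s t * ((μ t + 3 * p t) / 3 + Pa t / 2 - E t) = 0 := by
      rw [hQ t ht]
      field_simp [hφne t ht]
      ring
    simpa [hC, hsource] using hasDerivAt_virial (hφdot t ht) (hsdot t ht) (hBianchi t ht)
  exact fun t ht => hI.eqOn_zero_of_hasDerivAt_smul hs_cont hC_deriv ht₀ hC0 ht

/-- A Buchdahl star expelling exactly the heat flux
Q = (s/φ)·((μ + 3p)/3 + Π/2 − E) remains in Virial equilibrium (C = 0) for all
time in the interval I, hence never forms a black hole. -/
theorem virial_equilibrium_preserved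
    (φ Sg Θ μ p Pa E Q A : ℝ → ℝ) (I : Set ℝ) (t₀ : ℝ)
    (hI : I.OrdConnected) (ht₀ : t₀ ∈ I)
    (hφdiff : DifferentiableOn ℝ φ I) (hSgdiff : DifferentiableOn ℝ Sg I)
    (hΘdiff : DifferentiableOn ℝ Θ I) (hμdiff : DifferentiableOn ℝ μ I)
    (hpdiff : DifferentiableOn ℝ p I) (hPadiff : DifferentiableOn ℝ Pa I)
    (hEdiff : DifferentiableOn ℝ E I) (hQdiff : DifferentiableOn ℝ Q I)
    (hAdiff : DifferentiableOn ℝ A I)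
    (s : ℝ → ℝ) (hs : s = fun t => Sg t - (2/3) * Θ t)
    (hscont : ContinuousOn s I)
    (hφdot : ∀ t ∈ I, HasDerivAt φ (-s t * (A t - φ t / 2) + Q t) t)
    (hsdot : ∀ t ∈ I, HasDerivAt s
      (-A t * φ t + (1/2) * (s t)^2 + (μ t + 3 * p t) / 3 - E t + Pa t / 2) t)
    (hBianchi : ∀ t ∈ I, HasDerivAt (fun t => E t - μ t / 3 + Pa t / 2)
      ((3 * E t / 2 + Pa t / 4) * s t + (1/2) * φ t * Q t
        - (1/2) * (μ t + p t) * s t) t)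
    (hφne : ∀ t ∈ I, φ t ≠ 0)
    (hQ : ∀ t ∈ I, Q t = (s t / φ t) * ((μ t + 3 * p t) / 3 + Pa t / 2 - E t))
    (C : ℝ → ℝ)
    (hC : C = fun t => (φ t)^2 - (s t)^2 + (1/2) * (E t - μ t / 3 + Pa t / 2))
    (hC0 : C t₀ = 0) :
    ∀ t ∈ I, C t = 0 :=
  virial_equilibrium_preserved_general φ μ p Pa E Q A I t₀ hI ht₀ s hφdot hsdot hBianchi hφne hQ C
    hC hC0
end

section
/- Let M > 0 and R > 2M be real numbers. Define the gravitational energy outside radius R by E_G = R·(1 − √(1 − 2M/R)) − M (Brown–York quasilocal energy inside R minus the mass at infinity M). Then E_G = M/2 if and only if M/R = 4/9. (The Buchdahl star is characterized by the gravitational energy being exactly half the non-gravitational energy.) -/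
/-- A Buchdahl star is characterized by the gravitational energy being half
the non-gravitational energy: with E_G = R(1 − √(1 − 2M/R)) − M,
E_G = M/2 ↔ M/R = 4/9. -/
theorem buchdahl_iff_grav_energy_half
    (M R : ℝ) (hM : 0 < M) (hR : 2 * M < R)
    (EG : ℝ) (hEG : EG = R * (1 - Real.sqrt (1 - 2 * M / R)) - M) :
    EG = M / 2 ↔ M / R = 4/9 := by
  have hR0 : 0 < R := lt_trans (by linarith) hR
  set s := Real.sqrt (1 - 2 * M / R) with hs
  have harg : 0 ≤ 1 - 2 * M / R := by
    rw [sub_nonneg, div_le_one hR0]; linarith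
  have hs_sq : s ^ 2 = 1 - 2 * M / R := Real.sq_sqrt harg
  have hs_nonneg : 0 ≤ s := Real.sqrt_nonneg _
  have hs_sq' : R * (R * s ^ 2) = R * (R - 2 * M) := by
    rw [hs_sq]; field_simp
  constructor
  · intro h
    have h1 : R * s = R - 3 * M / 2 := by nlinarith [hEG, h]
    have h2 : 0 ≤ R - 3 * M / 2 := h1 ▸ mul_nonneg hR0.le hs_nonneg
    have h3 : (R - 3 * M / 2) ^ 2 = R * (R - 2 * M) := by
      rw [← h1]; nlinarith [hs_sq']
    have hR4 : R = 9 * M / 4 := by nlinarith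
    rw [hR4]; field_simp
  · intro h
    have hR4 : R = 9 * M / 4 := by
      field_simp at h; linarith
    have : 1 - 2 * M / R = 1 / 9 := by
      rw [hR4]; field_simp; ring
    have hsval : s = 1 / 3 := by
      rw [hs, this]
      rw [show (1:ℝ)/9 = (1/3)^2 by norm_num, Real.sqrt_sq (by norm_num)]
    rw [hEG, hsval, hR4]; ring
end

section
/- Let M > 0 and R > 2M be real numbers. Define E_G = R·(1 − √(1 − 2M/R)) − M. Then E_G ≤ M/2 if and only if M/R ≤ 4/9. (The Buchdahl bound M/R ≤ 4/9 is equivalent to the bound E_G/E_NG ≤ 1/2 on the ratio of gravitational to non-gravitational energy.) -/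
/-- The Buchdahl bound M/R ≤ 4/9 is equivalent to the gravitational energy
bound E_G ≤ M/2, where E_G = R(1 − √(1 − 2M/R)) − M. -/
theorem buchdahl_bound_iff_grav_energy_bound
    (M R : ℝ) (hM : 0 < M) (hR : 2 * M < R)
    (EG : ℝ) (hEG : EG = R * (1 - Real.sqrt (1 - 2 * M / R)) - M) :
    EG ≤ M / 2 ↔ M / R ≤ 4/9 := by
  subst hEG
  have hR0 : (0:ℝ) < R := by linarith
  have harg : 0 ≤ 1 - 2 * M / R := by
    have : 2 * M / R ≤ 1 := by rw [div_le_one hR0]; linarith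
    linarith
  set s := Real.sqrt (1 - 2 * M / R) with hsdef
  have hs0 : 0 ≤ s := Real.sqrt_nonneg _
  have hs2 : s ^ 2 = 1 - 2 * M / R := Real.sq_sqrt harg
  have hs2' : R * s ^ 2 = R - 2 * M := by
    rw [hs2]; field_simp
  rw [div_le_div_iff₀ hR0 (by norm_num : (0:ℝ) < 9)]
  constructor
  · intro h
    have h1 : 0 ≤ R * s - (R - 3 * M / 2) := by nlinarith
    have h2 : 0 < R * s + (R - 3 * M / 2) := by nlinarith
    have h3 : 0 ≤ (R * s - (R - 3 * M / 2)) * (R * s + (R - 3 * M / 2)) :=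
      mul_nonneg h1 (le_of_lt h2)
    nlinarith
  · intro h
    have key : R - 3 * M / 2 ≤ R * s := by
      have h2 : 0 < R * s + (R - 3 * M / 2) := by nlinarith
      nlinarith [sq_nonneg (R * s - (R - 3 * M / 2))]
    linarith
end
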